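/- arXiv:2012.12879 — 3 statements merged into one kernel-verified Lean document; each statement's English description precedes it below -/
import Mathlib

section
/- Let A be a commutative ring, let a, p ∈ A, and let M be an A-module whose p-power torsion is bounded, say every element of M killed by some power of p is killed by p^s. Consider the A[T]-module M[T] := M ⊗_A A[T] of polynomials with coefficients in M. Then every element of M[T] killed by multiplication by (aT − p) is killed by p^s; that is, the kernel of the map M[T] → M[T], q ↦ (aT − p)·q, is annihilated by p^s. In particular, when aT − p is a nonzerodivisor of A[T], the module Tor₁^A(A[T]/(aT − p), M) is killed by a power of p. (The content of Lemma 4.2.11, which is the case A = A_n, a = ū₁, computed from the free resolution A[T] →(aT−p) A[T] of B̃_n.) -/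
/-!
Comparing coefficients in `(aT - p) • q = 0` gives `p • q₀ = 0` and `p • qₙ₊₁ = a • qₙ`, so by
induction `p ^ (n + 1)` kills `qₙ`. Every coefficient of `q` is therefore `p`-power torsion, hence
killed by `p ^ s`.
-/

namespace PolynomialModule

open Polynomial

variable {R M : Type*} [CommRing R] [AddCommGroup M] [Module R M]

theorem C_smul (r : R) (q : PolynomialModule R M) : (C r : R[X]) • q = r • q := by
  rw [C_eq_algebraMap, algebraMap_smul]

theorem coeff_smul (r : R) (q : PolynomialModule R M) (n : ℕ) :
    (r • q).coeff n = r • q.coeff n :=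
  rfl

theorem coeff_sub (x y : PolynomialModule R M) : (x - y).coeff = x.coeff - y.coeff :=
  rfl

theorem coeff_C_mul_X_sub_C_smul_zero (a p : R) (q : PolynomialModule R M) :
    ((C a * X - C p : R[X]) • q).coeff 0 = -(p • q.coeff 0) := by
  simp [sub_smul, coeff_sub, C_smul, coeff_smul, C_mul_X_eq_monomial]

theorem coeff_C_mul_X_sub_C_smul_succ (a p : R) (q : PolynomialModule R M) (n : ℕ) :
    ((C a * X - C p : R[X]) • q).coeff (n + 1) = a • q.coeff n - p • q.coeff (n + 1) := by
  simp [sub_smul, coeff_sub, C_smul, coeff_smul, C_mul_X_eq_monomial]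

theorem pow_succ_smul_coeff_eq_zero_of_C_mul_X_sub_C_smul_eq_zero {a p : R}
    {q : PolynomialModule R M} (hq : (C a * X - C p : R[X]) • q = 0) (n : ℕ) :
    p ^ (n + 1) • q.coeff n = 0 := by
  induction n with
  | zero =>
    have h₀ := coeff_C_mul_X_sub_C_smul_zero a p q
    rw [hq, coeff_zero, Finsupp.zero_apply, eq_comm, neg_eq_zero] at h₀
    rwa [zero_add, pow_one]
  | succ n ih =>
    have hrec : p • q.coeff (n + 1) = a • q.coeff n := by
      have h := coeff_C_mul_X_sub_C_smul_succ a p q n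
      rw [hq, coeff_zero, Finsupp.zero_apply, eq_comm, sub_eq_zero] at h
      exact h.symm
    rw [pow_succ, mul_smul, hrec, smul_comm, ih, smul_zero]

end PolynomialModule

/-- **Lemma 4.2.11** (algebraic content).  Let `A` be a commutative ring, `a p ∈ A`, and `M`
an `A`-module whose `p`-power torsion is bounded by `p^s`.  Then every element of the
polynomial module `M[T]` killed by multiplication by `a·T - p` is killed by `p^s`; i.e. the
kernel of `(a·T - p) • - : M[T] → M[T]` is annihilated by `p^s`. -/
theorem polynomialModule_smul_ker_bounded_torsion
    (A : Type*) [CommRing A] (a p : A)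
    (M : Type*) [AddCommGroup M] [Module A M]
    (s : ℕ) (hs : ∀ x : M, (∃ k : ℕ, p ^ k • x = 0) → p ^ s • x = 0) :
    ∀ q : PolynomialModule A M,
      (Polynomial.C a * Polynomial.X - Polynomial.C p) • q = 0 →
      (Polynomial.C (p ^ s) : Polynomial A) • q = 0 := by
  intro q hq
  rw [PolynomialModule.C_smul]
  refine PolynomialModule.coeff_injective (Finsupp.ext fun n => ?_)
  rw [PolynomialModule.coeff_smul, PolynomialModule.coeff_zero, Finsupp.zero_apply]
  exact hs _
    ⟨n + 1, PolynomialModule.pow_succ_smul_coeff_eq_zero_of_C_mul_X_sub_C_smul_eq_zero hq n⟩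
end

section
/- Let A be a commutative ring and let a, p ∈ A. Then the localization away from p of the quotient ring A[T]/(aT − p) is isomorphic as an A-algebra to the localization of A away from pa; that is, (A[T]/(aT − p))[1/p] ≅ A[1/(pa)], an isomorphism under which T corresponds to p·a^{-1}. In particular, (A[T]/(aT − p))[1/p] is a localization of A[1/p]. (Claim used in the proof of Lemma 4.2.11: the ring B̃_n[1/p] is a localisation of A_n[1/p].) -/
set_option synthInstance.maxHeartbeats 1000000
set_option maxHeartbeats 1000000

open Polynomial

/-- The claim used in the proof of Lemma 4.2.11: for a commutative ring `A` and elements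
`a, p ∈ A`, the localization away from `p` of `A[T]/(aT - p)` is isomorphic to the
localization of `A` away from `p·a`; the isomorphism is compatible with the structure maps
from `A` (so it is an isomorphism of `A`-algebras) and sends (the image of) `T` to
`p·a⁻¹`, i.e. the image of `T` multiplied by `a` is the image of `p`. -/
theorem localization_quotient_linear_poly
    (A : Type*) [CommRing A] (a p : A) :
    ∃ e : Localization.Away
        (Ideal.Quotient.mk (Ideal.span {Polynomial.C a * Polynomial.X - Polynomial.C p})
          (Polynomial.C p)) ≃+*
      Localization.Away (p * a),
      (∀ x : A,
        e (algebraMap (Polynomial A ⧸ Ideal.span {Polynomial.C a * Polynomial.X - Polynomial.C p})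
            (Localization.Away
              (Ideal.Quotient.mk (Ideal.span {Polynomial.C a * Polynomial.X - Polynomial.C p})
                (Polynomial.C p)))
            (Ideal.Quotient.mk _ (Polynomial.C x)))
          = algebraMap A (Localization.Away (p * a)) x) ∧
      e (algebraMap (Polynomial A ⧸ Ideal.span {Polynomial.C a * Polynomial.X - Polynomial.C p})
            (Localization.Away
              (Ideal.Quotient.mk (Ideal.span {Polynomial.C a * Polynomial.X - Polynomial.C p})
                (Polynomial.C p)))
            (Ideal.Quotient.mk _ Polynomial.X))
          * algebraMap A (Localization.Away (p * a)) a
        = algebraMap A (Localization.Away (p * a)) p := by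
  set I : Ideal A[X] := Ideal.span {C a * X - C p} with hI
  set B := A[X] ⧸ I with hB
  set q : B := Ideal.Quotient.mk I (C p) with hq
  set L := Localization.Away (p * a) with hL
  set S := Localization.Away q with hS
  set α : A →+* L := algebraMap A L with hα
  set β : B →+* S := algebraMap B S with hβ
  set v : L := IsLocalization.Away.invSelf (p * a) with hv
  have hmulv : α (p * a) * v = 1 := IsLocalization.Away.mul_invSelf (p * a)
  -- t is the image of T : p^2 / (p a)
  set t : L := α p * α p * v with ht
  have hat : α a * t - α p = 0 := by
    have : α a * t = α p * (α (p * a) * v) := by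
      rw [ht]; push_cast [map_mul]; ring
    rw [this, hmulv, mul_one, sub_self]
  -- ψ : B → L
  have hker : ∀ f ∈ I, Polynomial.eval₂ α t f = 0 := by
    intro f hf
    rw [hI, Ideal.mem_span_singleton] at hf
    obtain ⟨c, rfl⟩ := hf
    rw [eval₂_mul]
    have : eval₂ α t (C a * X - C p) = 0 := by
      rw [eval₂_sub, eval₂_mul, eval₂_C, eval₂_X, eval₂_C, hat]
    rw [this, zero_mul]
  set ψ : B →+* L := Ideal.Quotient.lift I (Polynomial.eval₂RingHom α t) hker with hψ
  have hψC : ∀ x : A, ψ (Ideal.Quotient.mk I (C x)) = α x := fun x => by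
    rw [hψ]; exact eval₂_C α t
  have hψX : ψ (Ideal.Quotient.mk I X) = t := by
    rw [hψ]; exact eval₂_X α t
  have hψq : ψ q = α p := hψC p
  have hψqUnit : IsUnit (ψ q) := by
    rw [hψq]
    refine IsUnit.of_mul_eq_one (α a * v) ?_
    rw [← mul_assoc, ← map_mul, hmulv]
  set f : S →+* L := IsLocalization.Away.lift (S := S) q hψqUnit with hf
  have hfβ : ∀ b : B, f (β b) = ψ b := fun b => IsLocalization.Away.lift_eq q hψqUnit b
  -- ρ : A → S
  set ρ : A →+* S := β.comp ((Ideal.Quotient.mk I).comp (C : A →+* A[X])) with hρ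
  set w : S := IsLocalization.Away.invSelf (S := S) q with hw
  have hmulw : β q * w = 1 := IsLocalization.Away.mul_invSelf (S := S) q
  have hXa : β (Ideal.Quotient.mk I X) * β (Ideal.Quotient.mk I (C a)) = β q := by
    rw [← map_mul, ← map_mul]
    congr 1
    rw [hq]
    refine Ideal.Quotient.eq.mpr ?_
    rw [show X * C a - C p = C a * X - C p from by ring, hI]
    exact Ideal.subset_span (Set.mem_singleton _)
  have hρpa : ρ (p * a) * (β (Ideal.Quotient.mk I X) * w * w) = 1 := by
    have : ρ (p * a) = β q * β (Ideal.Quotient.mk I (C a)) := by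
      rw [hρ]
      simp only [RingHom.comp_apply, map_mul, hq]
    rw [this]
    calc β q * β (Ideal.Quotient.mk I (C a)) * (β (Ideal.Quotient.mk I X) * w * w)
        = (β q * w) * ((β (Ideal.Quotient.mk I X) * β (Ideal.Quotient.mk I (C a))) * w) := by ring
      _ = 1 := by rw [hmulw, hXa, hmulw, one_mul]
  have hρpaUnit : IsUnit (ρ (p * a)) := IsUnit.of_mul_eq_one _ hρpa
  set g : L →+* S := IsLocalization.Away.lift (S := L) (g := ρ) (p * a) hρpaUnit with hg
  have hgα : ∀ x : A, g (α x) = ρ x := fun x => IsLocalization.Away.lift_eq (p * a) hρpaUnit x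
  -- g v
  have hgv : g v = β (Ideal.Quotient.mk I X) * w * w := by
    have h1 : ρ (p * a) * g v = 1 := by
      rw [← hgα, ← map_mul, hmulv, map_one]
    calc g v = (ρ (p * a) * (β (Ideal.Quotient.mk I X) * w * w)) * g v := by rw [hρpa, one_mul]
      _ = (ρ (p * a) * g v) * (β (Ideal.Quotient.mk I X) * w * w) := by ring
      _ = β (Ideal.Quotient.mk I X) * w * w := by rw [h1, one_mul]
  have hgt : g t = β (Ideal.Quotient.mk I X) := by
    rw [ht, map_mul, map_mul, hgα, hgv]
    have hρp : ρ p = β q := by rw [hρ]; simp only [RingHom.comp_apply, hq]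
    rw [hρp]
    calc β q * β q * (β (Ideal.Quotient.mk I X) * w * w)
        = β (Ideal.Quotient.mk I X) * ((β q * w) * (β q * w)) := by ring
      _ = β (Ideal.Quotient.mk I X) := by rw [hmulw]; ring
  -- f ∘ g = id
  have hfg : f.comp g = RingHom.id L := by
    apply IsLocalization.ringHom_ext (Submonoid.powers (p * a))
    ext x
    simp only [RingHom.comp_apply, RingHom.id_apply]
    rw [show (algebraMap A L) x = α x from rfl, hgα, hρ]
    simp only [RingHom.comp_apply]
    rw [hfβ, hψC]
  -- g ∘ f = id
  have hloc : IsLocalization (Submonoid.powers q) S := inferInstance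
  have hgf : g.comp f = RingHom.id S := by
    apply @IsLocalization.ringHom_ext B _ (Submonoid.powers q) S _ _ hloc S _
    have : ((g.comp f).comp (algebraMap B S)).comp (Ideal.Quotient.mk I) =
        ((RingHom.id S).comp (algebraMap B S)).comp (Ideal.Quotient.mk I) := by
      apply Polynomial.ringHom_ext'
      · ext x
        simp only [RingHom.comp_apply, RingHom.id_apply]
        rw [show (algebraMap B S) (Ideal.Quotient.mk I (C x)) = β (Ideal.Quotient.mk I (C x))
          from rfl, hfβ, hψC, hgα, hρ]
        simp only [RingHom.comp_apply]
      · simp only [RingHom.comp_apply, RingHom.coe_comp, Function.comp_apply, RingHom.id_apply]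
        rw [show (algebraMap B S) (Ideal.Quotient.mk I X) = β (Ideal.Quotient.mk I X) from rfl,
          hfβ, hψX, hgt]
    refine RingHom.ext fun b => ?_
    obtain ⟨P, rfl⟩ := Ideal.Quotient.mk_surjective b
    exact congrFun (congrArg DFunLike.coe this) P
  refine ⟨RingEquiv.ofRingHom f g (by exact hfg) (by exact hgf), ?_, ?_⟩
  · intro x
    show f (β (Ideal.Quotient.mk I (C x))) = α x
    rw [hfβ, hψC]
  · show f (β (Ideal.Quotient.mk I X)) * α a = α p
    rw [hfβ, hψX]
    have : α a * t = α p := by have := hat; linear_combination this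
    rw [mul_comm, this]
end

section
/- Let A be a commutative ring, let p, u ∈ A, and for each i ≥ 1 set a_i := p·u^i ∈ A. Then for every i ≥ 1 the element p^{i−1}·(a_i T^i − p) lies in the ideal of A[T] generated by a₁T − p (indeed a₁^i T^i − p^i = p^{i−1}(a_i T^i − p) and (a₁T − p) divides a₁^i T^i − p^i). Consequently, for every n ≥ 1 the kernel of the natural surjection A[T]/(a₁T − p) → A[T]/(a₁T − p, a₂T² − p, …, a_n T^n − p) is killed by p^{n−1}. (Claim established in §4.2.9: the kernel of B̃_n → B_n is killed by p^{n−1}.) -/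
/-!
Since `p ^ (i - 1) * (p u ^ i T ^ i - p) = (p u T) ^ i - p ^ i` and `x - y` divides `x ^ i - y ^ i`,
each generator `a_i T ^ i - p` of the larger ideal is multiplied into `(a₁ T - p)` by
`p ^ (i - 1)`, hence by `p ^ (n - 1)` for `i ≤ n`; so `p ^ (n - 1)` kills the kernel.
-/

open Polynomial

theorem pow_mul_mul_pow_succ_sub_mem_span_mul_sub {R : Type*} [CommRing R] (a b : R) (n : ℕ) :
    a ^ n * (a * b ^ (n + 1) - a) ∈ Ideal.span {a * b - a} := by
  rw [Ideal.mem_span_singleton]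
  convert sub_dvd_pow_sub_pow (a * b) a (n + 1) using 1
  ring

theorem C_pow_pred_mul_sub_mem_span_C_mul_X_sub {A : Type*} [CommRing A] (p u : A) {i : ℕ}
    (hi : 1 ≤ i) :
    (C (p ^ (i - 1)) : A[X]) * (C (p * u ^ i) * X ^ i - C p)
      ∈ Ideal.span {C (p * u) * X - C p} := by
  obtain ⟨n, rfl⟩ := Nat.exists_eq_add_of_le' hi
  have hspan := pow_mul_mul_pow_succ_sub_mem_span_mul_sub (C p) (C u * X) n
  simpa only [Nat.add_sub_cancel, C_mul, C_pow, mul_pow, mul_assoc] using hspan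

theorem Ideal.Quotient.mk_mul_eq_zero_of_factor_eq_zero {R : Type*} [CommRing R]
    {I J : Ideal R} (h : I ≤ J) {c : R} (hc : c ∈ I.colon J) {x : R ⧸ I}
    (hx : Ideal.Quotient.factor h x = 0) : Ideal.Quotient.mk I c * x = 0 := by
  obtain ⟨f, rfl⟩ := Ideal.Quotient.mk_surjective x
  rw [Ideal.Quotient.factor_mk, Ideal.Quotient.eq_zero_iff_mem] at hx
  rw [← map_mul, Ideal.Quotient.eq_zero_iff_mem]
  exact Submodule.mem_colon.1 hc f hx

/-- The claim established in §4.2.9: with `a_i = p·u^i`, for every `i ≥ 1` the element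
`p^(i-1)·(a_i T^i - p)` lies in the ideal of `A[T]` generated by `a₁T - p`; consequently,
for every `n ≥ 1` the kernel of the natural surjection
`A[T]/(a₁T - p) → A[T]/(a₁T - p, …, a_n T^n - p)` is killed by `p^(n-1)`. -/
theorem kernel_of_Btilde_to_B_killed_by_pow_p
    (A : Type*) [CommRing A] (p u : A) :
    (∀ i : ℕ, 1 ≤ i →
      (C (p ^ (i - 1)) : A[X]) * (C (p * u ^ i) * X ^ i - C p)
        ∈ Ideal.span {C (p * u) * X - C p}) ∧
    (∀ n : ℕ, 1 ≤ n →
      ∀ h : Ideal.span {C (p * u) * X - C p} ≤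
          Ideal.span {g : A[X] | ∃ i : ℕ, 1 ≤ i ∧ i ≤ n ∧ g = C (p * u ^ i) * X ^ i - C p},
        ∀ x : A[X] ⧸ Ideal.span {C (p * u) * X - C p},
          Ideal.Quotient.factor h x = 0 →
            Ideal.Quotient.mk (Ideal.span {C (p * u) * X - C p}) (C (p ^ (n - 1))) * x = 0) := by
  refine ⟨fun i hi ↦ C_pow_pred_mul_sub_mem_span_C_mul_X_sub p u hi, fun n _ h x hx ↦ ?_⟩
  refine Ideal.Quotient.mk_mul_eq_zero_of_factor_eq_zero h ?_ hx
  rw [Ideal.colon_span, Submodule.mem_colon]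
  rintro _ ⟨i, hi, hin, rfl⟩
  have hsplit : (C (p ^ (n - 1)) : A[X]) = C (p ^ (n - i)) * C (p ^ (i - 1)) := by
    rw [← C_mul, ← pow_add, Nat.sub_add_sub_cancel hin hi]
  rw [smul_eq_mul, hsplit, mul_assoc]
  exact Ideal.mul_mem_left _ _ (C_pow_pred_mul_sub_mem_span_C_mul_X_sub p u hi)
end
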